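/- arXiv:math/0511247 — 11 statements merged into one kernel-verified Lean document; each statement's English description precedes it below -/
import Mathlib

section
/- For every continuously differentiable function φ : ℝ → ℝ such that ‖φ‖ and ‖φ'‖ are finite, the function σ ↦ σ·φ(σ) also has finite norm, and ‖σ φ(σ)‖ ≤ 4 ( ‖φ'‖ + ‖φ‖ ). -/
/-!
Write `w σ = exp (-σ² / 4)`. Since `w' = -(σ / 2) w`, the boundary term `σ φ² w` has derivative
`(φ² + 2 σ φ φ' - σ² φ² / 2) w`, so expanding `(σ φ - 4 φ')² w ≥ 0` gives
`(σ φ)² w ≤ 4 φ² w + 16 φ'² w - 4 (σ φ² w)'`.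
On `[-R, R]` the boundary contribution `R w(R) (φ(R)² + φ(-R)²)` is nonnegative, so
`∫_{-R}^{R} (σ φ)² w ≤ 4 ‖φ‖² + 16 ‖φ'‖²` uniformly in `R`; letting `R → ∞` gives integrability
and the same bound, and `√(4a + 16b) ≤ 2 √a + 4 √b`.
-/

open MeasureTheory

noncomputable def gaussNorm (φ : ℝ → ℝ) : ℝ :=
  Real.sqrt (∫ σ : ℝ, (φ σ) ^ 2 * Real.exp (-σ ^ 2 / 4))

open Real Filter intervalIntegral

theorem integrable_and_integral_le_of_forall_intervalIntegral_le {f : ℝ → ℝ} {C : ℝ}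
    (hf : LocallyIntegrable f) (hf₀ : ∀ x, 0 ≤ f x)
    (hC : ∀ R, 0 ≤ R → ∫ x in -R..R, f x ≤ C) :
    Integrable f ∧ ∫ x, f x ≤ C := by
  have hbound : ∀ᶠ R in atTop, ∫ x in -R..R, f x ≤ C :=
    (eventually_ge_atTop 0).mono hC
  have hint : Integrable f := by
    refine integrable_of_intervalIntegral_norm_bounded (a := fun R => -R) (b := fun R => R) C
      (fun R => (hf.integrableOn_isCompact isCompact_Icc).mono_set Set.Ioc_subset_Icc_self)
      tendsto_neg_atTop_atBot tendsto_id ?_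
    simpa only [Real.norm_of_nonneg (hf₀ _)] using hbound
  exact ⟨hint, le_of_tendsto (intervalIntegral_tendsto_integral hint tendsto_neg_atTop_atBot
    tendsto_id) hbound⟩

theorem intervalIntegral_le_integral_of_nonneg {f : ℝ → ℝ} (hf : Integrable f)
    (hf₀ : ∀ x, 0 ≤ f x) {a b : ℝ} (hab : a ≤ b) : ∫ x in a..b, f x ≤ ∫ x, f x := by
  rw [integral_of_le hab]
  exact setIntegral_le_integral hf (Eventually.of_forall hf₀)

theorem sqrt_sq_mul_add_sq_mul_le {x y a b : ℝ} (hx : 0 ≤ x) (hy : 0 ≤ y) (ha : 0 ≤ a)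
    (hb : 0 ≤ b) :
    √(a ^ 2 * x + b ^ 2 * y) ≤ a * √x + b * √y := by
  rw [sqrt_le_left (by positivity)]
  nlinarith [sq_sqrt hx, sq_sqrt hy,
    mul_nonneg (mul_nonneg ha hb) (mul_nonneg (sqrt_nonneg x) (sqrt_nonneg y))]

noncomputable def gaussWeight (σ : ℝ) : ℝ := exp (-σ ^ 2 / 4)

theorem gaussWeight_pos (σ : ℝ) : 0 < gaussWeight σ := exp_pos _

theorem gaussWeight_neg (σ : ℝ) : gaussWeight (-σ) = gaussWeight σ := by
  simp [gaussWeight]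

theorem sq_mul_gaussWeight_nonneg (ψ : ℝ → ℝ) (σ : ℝ) : 0 ≤ ψ σ ^ 2 * gaussWeight σ :=
  mul_nonneg (sq_nonneg _) (gaussWeight_pos σ).le

theorem continuous_gaussWeight : Continuous gaussWeight := by
  unfold gaussWeight; fun_prop

theorem hasDerivAt_gaussWeight (σ : ℝ) :
    HasDerivAt gaussWeight (-σ / 2 * gaussWeight σ) σ :=
  (((hasDerivAt_pow 2 σ).fun_neg.div_const 4).exp).congr_deriv (by
    simp only [gaussWeight]; ring)

theorem HasDerivAt.id_mul_sq_mul_gaussWeight {φ : ℝ → ℝ} {a σ : ℝ} (hφ : HasDerivAt φ a σ) :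
    HasDerivAt (fun σ => σ * φ σ ^ 2 * gaussWeight σ)
      ((φ σ ^ 2 + 2 * σ * φ σ * a - σ ^ 2 / 2 * φ σ ^ 2) * gaussWeight σ) σ :=
  (((hasDerivAt_id' σ).fun_mul (hφ.fun_pow 2)).fun_mul (hasDerivAt_gaussWeight σ)).congr_deriv
    (by ring)

theorem intervalIntegral_sq_id_mul_mul_gaussWeight_le {φ : ℝ → ℝ} (hφ : ContDiff ℝ 1 φ)
    {R : ℝ} (hR : 0 ≤ R) :
    ∫ σ in -R..R, (σ * φ σ) ^ 2 * gaussWeight σ ≤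
      4 * (∫ σ in -R..R, φ σ ^ 2 * gaussWeight σ) +
        16 * ∫ σ in -R..R, deriv φ σ ^ 2 * gaussWeight σ := by
  set G : ℝ → ℝ := fun σ =>
    (φ σ ^ 2 + 2 * σ * φ σ * deriv φ σ - σ ^ 2 / 2 * φ σ ^ 2) * gaussWeight σ
  have hφc : Continuous φ := hφ.continuous
  have hφ'c : Continuous (deriv φ) := hφ.continuous_deriv le_rfl
  have hw := continuous_gaussWeight
  have hG : ∫ σ in -R..R, G σ = R * (φ R ^ 2 + φ (-R) ^ 2) * gaussWeight R := by
    rw [integral_eq_sub_of_hasDerivAt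
      (fun σ _ => (hφ.differentiable one_ne_zero σ).hasDerivAt.id_mul_sq_mul_gaussWeight)
      ((by fun_prop : Continuous G).intervalIntegrable _ _), gaussWeight_neg]
    ring
  have hG₀ : 0 ≤ ∫ σ in -R..R, G σ := by
    rw [hG]; have := gaussWeight_pos R; positivity
  have hpointwise : ∀ σ, (σ * φ σ) ^ 2 * gaussWeight σ ≤
      4 * (φ σ ^ 2 * gaussWeight σ) + 16 * (deriv φ σ ^ 2 * gaussWeight σ) - 4 * G σ := by
    intro σ
    simp only [G]
    nlinarith [mul_nonneg (sq_nonneg (σ * φ σ - 4 * deriv φ σ)) (gaussWeight_pos σ).le]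
  have hii : ∀ f : ℝ → ℝ, Continuous f → IntervalIntegrable f volume (-R) R :=
    fun f hf => hf.intervalIntegrable _ _
  calc ∫ σ in -R..R, (σ * φ σ) ^ 2 * gaussWeight σ
      ≤ ∫ σ in -R..R, (4 * (φ σ ^ 2 * gaussWeight σ) + 16 * (deriv φ σ ^ 2 * gaussWeight σ)
          - 4 * G σ) :=
        integral_mono_on (by linarith) (hii _ (by fun_prop)) (hii _ (by fun_prop))
          fun σ _ => hpointwise σ
    _ = 4 * (∫ σ in -R..R, φ σ ^ 2 * gaussWeight σ) +
          16 * (∫ σ in -R..R, deriv φ σ ^ 2 * gaussWeight σ) - 4 * ∫ σ in -R..R, G σ := by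
        rw [intervalIntegral.integral_sub (hii _ (by fun_prop)) (hii _ (by fun_prop)),
          intervalIntegral.integral_add (hii _ (by fun_prop)) (hii _ (by fun_prop)),
          intervalIntegral.integral_const_mul, intervalIntegral.integral_const_mul,
          intervalIntegral.integral_const_mul]
    _ ≤ _ := by linarith

theorem integrable_and_integral_sq_id_mul_mul_gaussWeight_le {φ : ℝ → ℝ} (hφ : ContDiff ℝ 1 φ)
    (hint : Integrable fun σ => φ σ ^ 2 * gaussWeight σ)
    (hint' : Integrable fun σ => deriv φ σ ^ 2 * gaussWeight σ) :
    (Integrable fun σ => (σ * φ σ) ^ 2 * gaussWeight σ) ∧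
      ∫ σ, (σ * φ σ) ^ 2 * gaussWeight σ ≤
        4 * (∫ σ, φ σ ^ 2 * gaussWeight σ) + 16 * ∫ σ, deriv φ σ ^ 2 * gaussWeight σ := by
  have hφc : Continuous φ := hφ.continuous
  have hw := continuous_gaussWeight
  refine integrable_and_integral_le_of_forall_intervalIntegral_le
    (by fun_prop : Continuous fun σ => (σ * φ σ) ^ 2 * gaussWeight σ).locallyIntegrable
    (sq_mul_gaussWeight_nonneg fun σ => σ * φ σ) fun R hR => ?_
  have hA := intervalIntegral_le_integral_of_nonneg hint (sq_mul_gaussWeight_nonneg φ)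
    (neg_le_self hR)
  have hB := intervalIntegral_le_integral_of_nonneg hint' (sq_mul_gaussWeight_nonneg (deriv φ))
    (neg_le_self hR)
  linarith [intervalIntegral_sq_id_mul_mul_gaussWeight_le hφ hR]

/-- If `φ : ℝ → ℝ` is `C¹` with `‖φ‖` and `‖φ'‖` finite (in the Gaussian-weighted `L²`
sense), then `σ ↦ σ φ(σ)` also has finite norm, and `‖σ φ(σ)‖ ≤ 4 (‖φ'‖ + ‖φ‖)`. -/
theorem gaussNorm_mul_id_le
    (φ : ℝ → ℝ) (hφ : ContDiff ℝ 1 φ)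
    (hint : Integrable (fun σ : ℝ => (φ σ) ^ 2 * Real.exp (-σ ^ 2 / 4)))
    (hint' : Integrable (fun σ : ℝ => (deriv φ σ) ^ 2 * Real.exp (-σ ^ 2 / 4))) :
    Integrable (fun σ : ℝ => (σ * φ σ) ^ 2 * Real.exp (-σ ^ 2 / 4)) ∧
      gaussNorm (fun σ => σ * φ σ) ≤ 4 * (gaussNorm (deriv φ) + gaussNorm φ) := by
  obtain ⟨hint_id_mul, hle⟩ := integrable_and_integral_sq_id_mul_mul_gaussWeight_le hφ hint hint'
  refine ⟨hint_id_mul, ?_⟩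
  calc gaussNorm (fun σ => σ * φ σ)
      ≤ √(2 ^ 2 * (∫ σ, φ σ ^ 2 * gaussWeight σ) + 4 ^ 2 * ∫ σ, deriv φ σ ^ 2 * gaussWeight σ) :=
        sqrt_le_sqrt (hle.trans_eq (by ring))
    _ ≤ 2 * gaussNorm φ + 4 * gaussNorm (deriv φ) :=
        sqrt_sq_mul_add_sq_mul_le (integral_nonneg (sq_mul_gaussWeight_nonneg φ))
          (integral_nonneg (sq_mul_gaussWeight_nonneg (deriv φ))) zero_le_two zero_le_four
    _ ≤ 4 * (gaussNorm (deriv φ) + gaussNorm φ) := by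
        have : 0 ≤ gaussNorm φ := sqrt_nonneg _
        linarith
end

section
/- Let h₂(σ) = σ² − 2 and let N₂(h₂)(σ) = −(h₂'(σ))² − (1/2) h₂(σ)² = −4σ² − (1/2)(σ²−2)². Then ∫_ℝ h₂(σ) · N₂(h₂)(σ) · e^{-σ²/4} dσ = −8 · ∫_ℝ h₂(σ)² · e^{-σ²/4} dσ. -/
/-!
Over `ℝ`, the integral of an exact derivative `(p e^{-bσ²})' = (p' - 2bσ p) e^{-bσ²}`, with `p` a
polynomial and `b > 0`, vanishes. For `b = 1/4` the odd quintic `p = σ⁵ - 4σ³ + 36σ` solves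
`p' - (σ/2) p = h₂ N₂(h₂) + 8 h₂²`, so the two sides differ by such an integral.
-/

open MeasureTheory Real Polynomial

lemma integrable_pow_mul_exp_neg_mul_sq {b : ℝ} (hb : 0 < b) (n : ℕ) :
    Integrable fun x : ℝ => x ^ n * exp (-b * x ^ 2) := by
  simpa only [rpow_natCast] using
    integrable_rpow_mul_exp_neg_mul_sq hb (s := n) (neg_one_lt_zero.trans_le n.cast_nonneg)

namespace Polynomial

lemma integrable_eval_mul_exp_neg_mul_sq {b : ℝ} (hb : 0 < b) (p : ℝ[X]) :
    Integrable fun x : ℝ => p.eval x * exp (-b * x ^ 2) := by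
  induction p using Polynomial.induction_on' with
  | add p q hp hq =>
    simp only [eval_add, add_mul]
    exact hp.add hq
  | monomial n a =>
    simpa only [eval_monomial, mul_assoc] using (integrable_pow_mul_exp_neg_mul_sq hb n).const_mul a

lemma hasDerivAt_eval_mul_exp_neg_mul_sq (b : ℝ) (p : ℝ[X]) (x : ℝ) :
    HasDerivAt (fun x : ℝ => p.eval x * exp (-b * x ^ 2))
      ((p.derivative.eval x - 2 * b * x * p.eval x) * exp (-b * x ^ 2)) x := by
  have hexp : HasDerivAt (fun x : ℝ => exp (-b * x ^ 2)) (exp (-b * x ^ 2) * (-b * (2 * x))) x := by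
    simpa using ((hasDerivAt_pow 2 x).const_mul (-b)).exp
  exact ((p.hasDerivAt x).mul hexp).congr_deriv (by ring)

lemma integral_derivative_sub_mul_eval_mul_exp_neg_mul_sq {b : ℝ} (hb : 0 < b) (p : ℝ[X]) :
    ∫ x : ℝ, (p.derivative.eval x - 2 * b * x * p.eval x) * exp (-b * x ^ 2) = 0 := by
  have hint : Integrable fun x : ℝ =>
      (p.derivative.eval x - 2 * b * x * p.eval x) * exp (-b * x ^ 2) := by
    have h := integrable_eval_mul_exp_neg_mul_sq hb (derivative p - C (2 * b) * X * p)
    simpa only [eval_sub, eval_mul, eval_C, eval_X] using h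
  exact integral_eq_zero_of_hasDerivAt_of_integrable (hasDerivAt_eval_mul_exp_neg_mul_sq b p)
    hint (integrable_eval_mul_exp_neg_mul_sq hb p)

end Polynomial

/-- With `h₂(σ) = σ² − 2` and `N₂(h₂)(σ) = −(h₂')² − (1/2) h₂² = −4σ² − (1/2)(σ²−2)²`,
one has `∫ h₂ N₂(h₂) e^{-σ²/4} dσ = −8 ∫ h₂² e^{-σ²/4} dσ`. -/
theorem h2_quadratic_projection :
    ∫ σ : ℝ, (σ ^ 2 - 2) * (-4 * σ ^ 2 - (1 / 2) * (σ ^ 2 - 2) ^ 2) * Real.exp (-σ ^ 2 / 4)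
      = -8 * ∫ σ : ℝ, (σ ^ 2 - 2) ^ 2 * Real.exp (-σ ^ 2 / 4) := by
  have hb : (0 : ℝ) < 1 / 4 := by norm_num
  simp_rw [show ∀ σ : ℝ, -σ ^ 2 / 4 = -(1 / 4) * σ ^ 2 from fun σ => by ring]
  have hint_h2N2 : Integrable fun σ : ℝ =>
      (σ ^ 2 - 2) * (-4 * σ ^ 2 - (1 / 2) * (σ ^ 2 - 2) ^ 2) * exp (-(1 / 4) * σ ^ 2) := by
    have h := integrable_eval_mul_exp_neg_mul_sq hb
      ((X ^ 2 - 2) * (-4 * X ^ 2 - C (1 / 2) * (X ^ 2 - 2) ^ 2))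
    simpa only [eval_mul, eval_sub, eval_neg, eval_pow, eval_X, eval_C, eval_ofNat] using h
  have hint_h2sq : Integrable fun σ : ℝ => (σ ^ 2 - 2) ^ 2 * exp (-(1 / 4) * σ ^ 2) := by
    have h := integrable_eval_mul_exp_neg_mul_sq hb ((X ^ 2 - 2) ^ 2)
    simpa only [eval_sub, eval_pow, eval_X, eval_ofNat] using h
  have hexact : ∫ σ : ℝ, ((σ ^ 2 - 2) * (-4 * σ ^ 2 - (1 / 2) * (σ ^ 2 - 2) ^ 2)
      * exp (-(1 / 4) * σ ^ 2) + 8 * ((σ ^ 2 - 2) ^ 2 * exp (-(1 / 4) * σ ^ 2))) = 0 := by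
    convert integral_derivative_sub_mul_eval_mul_exp_neg_mul_sq hb (X ^ 5 - 4 * X ^ 3 + 36 * X)
      using 3 with σ
    simp only [map_add, derivative_sub, derivative_mul, derivative_X_pow_succ, derivative_ofNat,
      derivative_X, map_one, Nat.cast_ofNat, eval_add, eval_sub, eval_mul, eval_C, eval_pow,
      eval_X, eval_ofNat, eval_one, eval_zero]
    ring
  rw [integral_add hint_h2N2 (hint_h2sq.const_mul 8), integral_const_mul] at hexact
  linarith
end

section
/- For all real numbers a and τ with 4 ≤ a ≤ τ, one has ∫_a^τ e^s / s² ds ≤ 2 e^τ / τ². -/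
/-! The function `2 eˢ / s²` has derivative `2 eˢ / s² - 4 eˢ / s³`, which dominates `eˢ / s²`
as soon as `s ≥ 4`; integrating gives `∫ₐ^τ eˢ / s² ≤ 2 e^τ / τ² - 2 eᵃ / a² ≤ 2 e^τ / τ²`.
The same argument works for `eˢ / sⁿ` on `[2n, ∞)`. -/

open Real Set

theorem hasDerivAt_exp_div_pow (n : ℕ) {x : ℝ} (hx : x ≠ 0) :
    HasDerivAt (fun x => exp x / x ^ n) (exp x / x ^ n - n * exp x / x ^ (n + 1)) x := by
  refine ((hasDerivAt_exp x).fun_div (hasDerivAt_pow n x) (pow_ne_zero n hx)).congr_deriv ?_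
  rcases n with _ | n
  · simp
  · rw [Nat.add_sub_cancel]
    field_simp
    ring

theorem exp_div_pow_le_two_mul_deriv {n : ℕ} {x : ℝ} (hx : 0 < x) (hnx : 2 * n ≤ x) :
    exp x / x ^ n ≤ 2 * (exp x / x ^ n - n * exp x / x ^ (n + 1)) := by
  have hsplit : n * exp x / x ^ (n + 1) = n / x * (exp x / x ^ n) := by
    field_simp
    ring
  have hratio : n / x ≤ 1 / 2 := by
    rw [div_le_div_iff₀ hx two_pos]
    linarith
  rw [hsplit]
  nlinarith [show 0 < exp x / x ^ n by positivity]

theorem integral_exp_div_pow_le {n : ℕ} {a b : ℝ} (ha : 0 < a) (hna : 2 * n ≤ a) (hab : a ≤ b) :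
    ∫ x in a..b, exp x / x ^ n ≤ 2 * exp b / b ^ n := by
  have hpos : ∀ x ∈ Icc a b, 0 < x := fun x hx => ha.trans_le hx.1
  have hcont : ContinuousOn (fun x => exp x / x ^ n) (Icc a b) :=
    continuous_exp.continuousOn.div (continuousOn_pow n)
      fun x hx => pow_ne_zero n (hpos x hx).ne'
  have hftc := intervalIntegral.integral_le_sub_of_hasDeriv_right_of_le
    (g := fun x => 2 * (exp x / x ^ n)) hab (continuousOn_const.mul hcont)
    (fun x hx => ((hasDerivAt_exp_div_pow n (hpos x (Ioo_subset_Icc_self hx)).ne').const_mul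
      2).hasDerivWithinAt)
    hcont.integrableOn_Icc
    (fun x hx => exp_div_pow_le_two_mul_deriv (hpos x (Ioo_subset_Icc_self hx))
      (hna.trans (Ioo_subset_Icc_self hx).1))
  have hlower : 0 ≤ 2 * (exp a / a ^ n) := by positivity
  rw [mul_div_assoc]
  linarith

/-- For all real `a`, `τ` with `4 ≤ a ≤ τ`, one has `∫_a^τ e^s/s² ds ≤ 2 e^τ/τ²`. -/
theorem integral_exp_div_sq_le (a τ : ℝ) (ha : 4 ≤ a) (haτ : a ≤ τ) :
    ∫ s in a..τ, Real.exp s / s ^ 2 ≤ 2 * Real.exp τ / τ ^ 2 :=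
  integral_exp_div_pow_le (by linarith) (by norm_num; linarith) haτ
end

section
/- Let C ≥ 0 and τ₀ ≥ 4, and let f : [τ₀, ∞) → ℝ be a differentiable function with f(τ) ≥ 0 and f'(τ) ≤ −f(τ) + C/τ² for all τ ≥ τ₀. Then for all τ ≥ τ₀, f(τ) ≤ e^{τ₀ − τ} f(τ₀) + 2C/τ². -/
/-!
Multiplying by the integrating factor `e^τ` turns `u' ≤ -u` into monotonicity of `e^τ u`, which
gives the comparison principle `f - φ ≤ e^{τ₀ - τ} (f - φ)(τ₀)` for any supersolution
`φ' ≥ -φ + C/τ²`. For `τ ≥ 4` the function `φ = 2C/τ²` is such a supersolution, since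
`φ' = -4C/τ³ ≥ -C/τ²`.
-/

open Real Set

theorem le_exp_sub_mul_of_deriv_le_neg {u : ℝ → ℝ} {a : ℝ}
    (hu : ∀ t, a ≤ t → DifferentiableAt ℝ u t) (hu' : ∀ t, a ≤ t → deriv u t ≤ -u t)
    {t : ℝ} (ht : a ≤ t) : u t ≤ exp (a - t) * u a := by
  have hderiv : ∀ s, a ≤ s → HasDerivAt (fun s => exp s * u s)
      (exp s * u s + exp s * deriv u s) s :=
    fun s hs => (hasDerivAt_exp s).mul (hu s hs).hasDerivAt
  have hanti : AntitoneOn (fun s => exp s * u s) (Ici a) := by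
    refine antitoneOn_of_deriv_nonpos (convex_Ici a)
      (fun s hs => (hderiv s hs).continuousAt.continuousWithinAt) ?_ ?_
    · rw [interior_Ici]
      exact fun s hs => (hderiv s hs.le).differentiableAt.differentiableWithinAt
    · rw [interior_Ici]
      intro s hs
      rw [(hderiv s hs.le).deriv, ← mul_add]
      exact mul_nonpos_of_nonneg_of_nonpos (exp_pos s).le (by linarith [hu' s hs.le])
  have hmono : exp t * u t ≤ exp a * u a := hanti self_mem_Ici ht ht
  rw [exp_sub, div_mul_eq_mul_div, le_div_iff₀ (exp_pos t), mul_comm]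
  exact hmono

theorem sub_le_exp_sub_mul_of_deriv_le {f φ h : ℝ → ℝ} {a : ℝ}
    (hf : ∀ t, a ≤ t → DifferentiableAt ℝ f t) (hφ : ∀ t, a ≤ t → DifferentiableAt ℝ φ t)
    (hf' : ∀ t, a ≤ t → deriv f t ≤ -f t + h t) (hφ' : ∀ t, a ≤ t → -φ t + h t ≤ deriv φ t)
    {t : ℝ} (ht : a ≤ t) : f t - φ t ≤ exp (a - t) * (f a - φ a) := by
  refine le_exp_sub_mul_of_deriv_le_neg (fun s hs => (hf s hs).sub (hφ s hs))
    (fun s hs => ?_) ht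
  rw [deriv_sub (hf s hs) (hφ s hs), Pi.sub_apply]
  linarith [hf' s hs, hφ' s hs]

theorem hasDerivAt_div_sq (c : ℝ) {t : ℝ} (ht : t ≠ 0) :
    HasDerivAt (fun s => c / s ^ 2) (-2 * c / t ^ 3) t := by
  refine ((hasDerivAt_const t c).fun_div (hasDerivAt_pow 2 t) (pow_ne_zero 2 ht)).congr_deriv ?_
  field_simp
  ring

theorem neg_div_sq_le_neg_div_cube {C t : ℝ} (hC : 0 ≤ C) (ht : 4 ≤ t) :
    -C / t ^ 2 ≤ -4 * C / t ^ 3 := by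
  have ht0 : 0 < t := by linarith
  rw [div_le_div_iff₀ (by positivity) (by positivity)]
  nlinarith [mul_nonneg (mul_nonneg hC (sq_nonneg t)) (sub_nonneg.mpr ht)]

theorem gronwall_decay_general (C τ₀ : ℝ) (hC : 0 ≤ C) (hτ₀ : 4 ≤ τ₀) (f : ℝ → ℝ)
    (hdiff : ∀ τ, τ₀ ≤ τ → DifferentiableAt ℝ f τ)
    (hineq : ∀ τ, τ₀ ≤ τ → deriv f τ ≤ -f τ + C / τ ^ 2) :
    ∀ τ, τ₀ ≤ τ → f τ ≤ Real.exp (τ₀ - τ) * f τ₀ + 2 * C / τ ^ 2 := by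
  intro τ hτ
  have hφ : ∀ t, τ₀ ≤ t → HasDerivAt (fun s => 2 * C / s ^ 2) (-2 * (2 * C) / t ^ 3) t :=
    fun t ht => hasDerivAt_div_sq (2 * C) (by linarith)
  have hsuper : ∀ t, τ₀ ≤ t →
      -(2 * C / t ^ 2) + C / t ^ 2 ≤ deriv (fun s => 2 * C / s ^ 2) t := by
    intro t ht
    rw [(hφ t ht).deriv]
    convert neg_div_sq_le_neg_div_cube hC (hτ₀.trans ht) using 1 <;> ring
  have hcomp := sub_le_exp_sub_mul_of_deriv_le hdiff (fun t ht => (hφ t ht).differentiableAt)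
    hineq hsuper hτ
  have hφ₀ : 0 ≤ exp (τ₀ - τ) * (2 * C / τ₀ ^ 2) := by positivity
  linarith

/-- Gronwall-type decay: if `C ≥ 0`, `τ₀ ≥ 4`, and `f` is differentiable on `[τ₀, ∞)` with
`f ≥ 0` and `f' ≤ -f + C/τ²` there, then `f(τ) ≤ e^{τ₀ - τ} f(τ₀) + 2C/τ²` for `τ ≥ τ₀`. -/
theorem gronwall_decay (C τ₀ : ℝ) (hC : 0 ≤ C) (hτ₀ : 4 ≤ τ₀) (f : ℝ → ℝ)
    (hdiff : ∀ τ, τ₀ ≤ τ → DifferentiableAt ℝ f τ)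
    (hpos : ∀ τ, τ₀ ≤ τ → 0 ≤ f τ)
    (hineq : ∀ τ, τ₀ ≤ τ → deriv f τ ≤ -f τ + C / τ ^ 2) :
    ∀ τ, τ₀ ≤ τ → f τ ≤ Real.exp (τ₀ - τ) * f τ₀ + 2 * C / τ ^ 2 :=
  gronwall_decay_general C τ₀ hC hτ₀ f hdiff hineq
end

section
/- Let τ₀ ≥ 1 and C ≥ 0, and let a : [τ₀, ∞) → ℝ be a differentiable, bounded function such that |a'(τ) − a(τ)| ≤ C/τ² for all τ ≥ τ₀. Then |a(τ)| ≤ C/τ² for all τ ≥ τ₀. -/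
/-! The weight `e^{-s}` turns `a' - a` into the derivative of `e^{-s} a(s)`. If `b' ≤ b` on
`[t, ∞)`, then `e^{-s} b(s)` is antitone there, and a lower bound `b ≥ -M` gives
`e^{-t} b(t) ≥ e^{-s} b(s) ≥ -M e^{-s} → 0`, so `b(t) ≥ 0`. Applied to `b = K ± a`, where `K`
bounds `|a' - a|` on `[t, ∞)`, this gives `|a(t)| ≤ K`; for `t = τ` we may take `K = C/τ²`
since `C/s²` decreases. -/

open Real Set Filter

theorem hasDerivAt_exp_neg_mul {b : ℝ → ℝ} {s : ℝ} (hb : DifferentiableAt ℝ b s) :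
    HasDerivAt (fun x ↦ exp (-x) * b x) (exp (-s) * (deriv b s - b s)) s := by
  have hexp : HasDerivAt (fun x ↦ exp (-x)) (-exp (-s)) s := by
    simpa using (hasDerivAt_neg' s).exp
  exact (hexp.mul hb.hasDerivAt).congr_deriv (by ring)

theorem antitoneOn_exp_neg_mul_of_deriv_le_self {b : ℝ → ℝ} {t : ℝ}
    (hdiff : ∀ s ≥ t, DifferentiableAt ℝ b s) (hle : ∀ s ≥ t, deriv b s ≤ b s) :
    AntitoneOn (fun x ↦ exp (-x) * b x) (Ici t) := by
  have hderiv : ∀ s ≥ t, HasDerivAt (fun x ↦ exp (-x) * b x) (exp (-s) * (deriv b s - b s)) s :=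
    fun s hs ↦ hasDerivAt_exp_neg_mul (hdiff s hs)
  refine antitoneOn_of_deriv_nonpos (convex_Ici t)
    (fun s hs ↦ (hderiv s hs).continuousAt.continuousWithinAt) ?_ fun s hs ↦ ?_
  · rw [interior_Ici]
    exact fun s hs ↦ (hderiv s hs.le).differentiableAt.differentiableWithinAt
  · rw [interior_Ici] at hs
    rw [(hderiv s hs.le).deriv]
    exact mul_nonpos_of_nonneg_of_nonpos (exp_pos _).le (sub_nonpos.mpr (hle s hs.le))

theorem nonneg_of_deriv_le_self_of_bddBelow {b : ℝ → ℝ} {t M : ℝ}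
    (hdiff : ∀ s ≥ t, DifferentiableAt ℝ b s) (hle : ∀ s ≥ t, deriv b s ≤ b s)
    (hM : ∀ s ≥ t, -M ≤ b s) : 0 ≤ b t := by
  have hanti := antitoneOn_exp_neg_mul_of_deriv_le_self hdiff hle
  have hlim : Tendsto (fun s ↦ exp (-s) * -M) atTop (nhds 0) := by
    simpa using tendsto_exp_neg_atTop_nhds_zero.mul_const (-M)
  have hweighted : 0 ≤ exp (-t) * b t := by
    refine le_of_tendsto hlim ?_
    filter_upwards [eventually_ge_atTop t] with s hs
    calc exp (-s) * -M ≤ exp (-s) * b s := mul_le_mul_of_nonneg_left (hM s hs) (exp_pos _).le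
      _ ≤ exp (-t) * b t := hanti self_mem_Ici hs hs
  exact nonneg_of_mul_nonneg_right hweighted (exp_pos _)

theorem abs_le_of_abs_deriv_sub_self_le {a : ℝ → ℝ} {t M K : ℝ}
    (hdiff : ∀ s ≥ t, DifferentiableAt ℝ a s) (hM : ∀ s ≥ t, |a s| ≤ M)
    (hforce : ∀ s ≥ t, |deriv a s - a s| ≤ K) : |a t| ≤ K := by
  have hlower : 0 ≤ a t + K := by
    refine nonneg_of_deriv_le_self_of_bddBelow (b := (a · + K)) (M := M - K)
      (fun s hs ↦ (hdiff s hs).add_const K) (fun s hs ↦ ?_) (fun s hs ↦ ?_)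
    · rw [deriv_add_const]
      linarith [(abs_le.mp (hforce s hs)).2]
    · linarith [(abs_le.mp (hM s hs)).1]
  have hupper : 0 ≤ K - a t := by
    refine nonneg_of_deriv_le_self_of_bddBelow (b := (K - a ·)) (M := M - K)
      (fun s hs ↦ (hdiff s hs).const_sub K) (fun s hs ↦ ?_) (fun s hs ↦ ?_)
    · rw [deriv_const_sub]
      linarith [(abs_le.mp (hforce s hs)).1]
    · linarith [(abs_le.mp (hM s hs)).2]
  exact abs_le.mpr ⟨by linarith, by linarith⟩

/-- If `a` is differentiable and bounded on `[τ₀, ∞)` with `|a' - a| ≤ C/τ²` there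
(`τ₀ ≥ 1`, `C ≥ 0`), then `|a(τ)| ≤ C/τ²` for all `τ ≥ τ₀`. -/
theorem bounded_forced_growth_decay (τ₀ C : ℝ) (hτ₀ : 1 ≤ τ₀) (hC : 0 ≤ C)
    (a : ℝ → ℝ)
    (hdiff : ∀ τ, τ₀ ≤ τ → DifferentiableAt ℝ a τ)
    (hbdd : ∃ M : ℝ, ∀ τ, τ₀ ≤ τ → |a τ| ≤ M)
    (hineq : ∀ τ, τ₀ ≤ τ → |deriv a τ - a τ| ≤ C / τ ^ 2) :
    ∀ τ, τ₀ ≤ τ → |a τ| ≤ C / τ ^ 2 := by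
  obtain ⟨M, hM⟩ := hbdd
  intro τ hτ
  have hτpos : 0 < τ := by linarith
  refine abs_le_of_abs_deriv_sub_self_le (M := M) (fun s hs ↦ hdiff s (hτ.trans hs))
    (fun s hs ↦ hM s (hτ.trans hs)) fun s hs ↦ ?_
  calc |deriv a s - a s| ≤ C / s ^ 2 := hineq s (hτ.trans hs)
    _ ≤ C / τ ^ 2 := div_le_div_of_nonneg_left hC (by positivity) (pow_le_pow_left₀ hτpos.le hs 2)
end

section
/- Let τ₀ ≥ 1 and C ≥ 0, and let a : [τ₀, ∞) → ℝ be a differentiable function satisfying |a'(τ) + 8 a(τ)²| ≤ C/τ³ for all τ ≥ τ₀. Then either there exists a constant C' such that a(τ) ≤ C'/τ² for all τ ≥ τ₀ + 1, or else τ · a(τ) → 1/8 as τ → ∞. -/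
open Filter

set_option maxHeartbeats 1000000

open Set in
private lemma comp_le_aux {f g : ℝ → ℝ} {x₀ : ℝ}
    (hf : ∀ x, x₀ ≤ x → DifferentiableAt ℝ f x)
    (hg : ∀ x, x₀ ≤ x → DifferentiableAt ℝ g x)
    (h0 : f x₀ ≤ g x₀)
    (hlt : ∀ x, x₀ ≤ x → f x = g x → deriv f x < deriv g x) :
    ∀ x, x₀ ≤ x → f x ≤ g x := by
  intro x hx
  have H := image_le_of_deriv_right_lt_deriv_boundary' (a := x₀) (b := x)
    (f := f) (f' := deriv f) (B := g) (B' := deriv g)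
    (fun y hy => (hf y hy.1).continuousAt.continuousWithinAt)
    (fun y hy => (hf y hy.1).hasDerivAt.hasDerivWithinAt)
    h0
    (fun y hy => (hg y hy.1).continuousAt.continuousWithinAt)
    (fun y hy => (hg y hy.1).hasDerivAt.hasDerivWithinAt)
    (fun y hy => hlt y hy.1)
  exact H (right_mem_Icc.2 hx)

/-- Dichotomy for the coefficient `a₂`: if `a` is differentiable on `[τ₀, ∞)` (`τ₀ ≥ 1`)
and `|a' + 8a²| ≤ C/τ³` there, then either `a(τ) ≤ C'/τ²` for all `τ ≥ τ₀ + 1` and some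
constant `C'`, or else `τ · a(τ) → 1/8` as `τ → ∞`. -/
theorem a2_dichotomy (τ₀ C : ℝ) (hτ₀ : 1 ≤ τ₀) (hC : 0 ≤ C) (a : ℝ → ℝ)
    (hdiff : ∀ τ, τ₀ ≤ τ → DifferentiableAt ℝ a τ)
    (hineq : ∀ τ, τ₀ ≤ τ → |deriv a τ + 8 * (a τ) ^ 2| ≤ C / τ ^ 3) :
    (∃ C' : ℝ, ∀ τ, τ₀ + 1 ≤ τ → a τ ≤ C' / τ ^ 2) ∨
      Tendsto (fun τ => τ * a τ) atTop (nhds (1 / 8)) := by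
  have hτpos : ∀ τ : ℝ, τ₀ ≤ τ → 0 < τ := fun τ h => lt_of_lt_of_le (by linarith) h
  set b : ℝ → ℝ := fun τ => τ * a τ with hbdef
  have hbdiff : ∀ τ, τ₀ ≤ τ → DifferentiableAt ℝ b τ := fun τ h =>
    differentiableAt_id.mul (hdiff τ h)
  have hbderiv : ∀ τ, τ₀ ≤ τ → deriv b τ = a τ + τ * deriv a τ := by
    intro τ h
    have H : HasDerivAt b (1 * a τ + τ * deriv a τ) τ :=
      (hasDerivAt_id τ).mul ((hdiff τ h).hasDerivAt)
    simpa using H.deriv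
  have hkey : ∀ τ, τ₀ ≤ τ → |deriv b τ - (b τ - 8 * (b τ) ^ 2) / τ| ≤ C / τ ^ 2 := by
    intro τ h
    have ht := hτpos τ h
    have h1 : deriv b τ - (b τ - 8 * (b τ) ^ 2) / τ = τ * (deriv a τ + 8 * (a τ) ^ 2) := by
      rw [hbderiv τ h]
      simp only [hbdef]
      field_simp
      ring
    rw [h1, abs_mul, abs_of_pos ht]
    calc τ * |deriv a τ + 8 * a τ ^ 2| ≤ τ * (C / τ ^ 3) :=
          mul_le_mul_of_nonneg_left (hineq τ h) ht.le
      _ = C / τ ^ 2 := by field_simp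
  have hub : ∀ τ, τ₀ ≤ τ → deriv b τ ≤ (b τ - 8 * (b τ) ^ 2) / τ + C / τ ^ 2 := by
    intro τ h; have := (abs_le.1 (hkey τ h)).2; linarith
  have hlb : ∀ τ, τ₀ ≤ τ → (b τ - 8 * (b τ) ^ 2) / τ - C / τ ^ 2 ≤ deriv b τ := by
    intro τ h; have := (abs_le.1 (hkey τ h)).1; linarith
  by_cases hP : ∃ β T, β < 1 / 8 ∧ τ₀ ≤ T ∧ ∀ τ, T ≤ τ → b τ ≤ β
  · -- fast-decay case
    left
    obtain ⟨β, T, hβ, hTτ₀, hbb⟩ := hP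
    set ε : ℝ := 1 - 8 * β with hεdef
    have hε : 0 < ε := by rw [hεdef]; linarith
    set K : ℝ := 2 * C / ε with hKdef
    have hK : 0 ≤ K := div_nonneg (by linarith) hε.le
    have hCK : ε * K = 2 * C := by rw [hKdef]; field_simp
    set T' : ℝ := max T τ₀ with hT'def
    have hT'τ₀ : τ₀ ≤ T' := le_max_right _ _
    have hdecay : ∀ τ₁, T' ≤ τ₁ → b τ₁ ≤ K / τ₁ := by
      intro τ₁ hτ₁
      by_contra hcon
      push_neg at hcon
      have hτ₁τ₀ : τ₀ ≤ τ₁ := le_trans hT'τ₀ hτ₁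
      have hτ₁pos := hτpos τ₁ hτ₁τ₀
      have hb1pos : 0 < b τ₁ := lt_of_le_of_lt (div_nonneg hK hτ₁pos.le) hcon
      set m : ℝ → ℝ := fun τ => b τ₁ + (b τ₁ * (ε / 2)) * (Real.log τ - Real.log τ₁)
        with hmdef
      have hmderiv : ∀ τ, τ₀ ≤ τ → HasDerivAt m (b τ₁ * (ε / 2) * τ⁻¹) τ := by
        intro τ h
        have H := (((Real.hasDerivAt_log (hτpos τ h).ne').sub_const
          (Real.log τ₁)).const_mul (b τ₁ * (ε / 2))).const_add (b τ₁)
        simpa [hmdef] using H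
      have hmb : ∀ τ, τ₁ ≤ τ → m τ ≤ b τ := by
        apply comp_le_aux
        · intro x hx; exact (hmderiv x (hτ₁τ₀.trans hx)).differentiableAt
        · intro x hx; exact hbdiff x (hτ₁τ₀.trans hx)
        · simp [hmdef]
        · intro x hx heq
          have hxτ₀ : τ₀ ≤ x := hτ₁τ₀.trans hx
          have hxpos := hτpos x hxτ₀
          have hvle : b x ≤ β := hbb x (le_trans (le_max_left _ _) (hτ₁.trans hx))
          have hvge : b τ₁ ≤ b x := by
            rw [← heq]
            have hlog : Real.log τ₁ ≤ Real.log x := Real.log_le_log hτ₁pos hx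
            simp only [hmdef]
            nlinarith [mul_nonneg (mul_nonneg hb1pos.le (by linarith : (0:ℝ) ≤ ε / 2))
              (sub_nonneg.2 hlog)]
          have hKx : K / x < b x := by
            have h1 : K / x ≤ K / τ₁ := by
              rw [div_le_div_iff₀ hxpos hτ₁pos]; nlinarith
            linarith
          rw [(hmderiv x hxτ₀).deriv]
          refine lt_of_lt_of_le ?_ (hlb x hxτ₀)
          have hKvx : K < b x * x := by
            rw [div_lt_iff₀ hxpos] at hKx; linarith
          have heps : ε ≤ 1 - 8 * b x := by rw [hεdef]; linarith
          have hbxpos : 0 < b x := lt_of_lt_of_le hb1pos hvge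
          have hnum : 0 < (b x - 8 * (b x) ^ 2) * x - C - b τ₁ * (ε / 2) * x := by
            nlinarith [mul_nonneg (mul_nonneg hbxpos.le hxpos.le) (sub_nonneg.2 heps),
              mul_le_mul_of_nonneg_right hvge (by positivity : (0:ℝ) ≤ ε / 2 * x),
              mul_lt_mul_of_pos_left hKvx (by linarith : (0:ℝ) < ε / 2)]
          have heq2 : (b x - 8 * (b x) ^ 2) / x - C / x ^ 2 - b τ₁ * (ε / 2) * x⁻¹
              = ((b x - 8 * (b x) ^ 2) * x - C - b τ₁ * (ε / 2) * x) / x ^ 2 := by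
            field_simp
          have hpos2 := div_pos hnum (pow_pos hxpos 2)
          linarith [heq2 ▸ hpos2]
      -- now derive a contradiction: m is unbounded but b ≤ β
      obtain ⟨u, hu0, hu1⟩ : ∃ u : ℝ, 2 * (β - b τ₁) / (ε * b τ₁) < u ∧ (0:ℝ) ≤ u :=
        ⟨max 0 (2 * (β - b τ₁) / (ε * b τ₁)) + 1,
          by linarith [le_max_right (0:ℝ) (2 * (β - b τ₁) / (ε * b τ₁))],
          by linarith [le_max_left (0:ℝ) (2 * (β - b τ₁) / (ε * b τ₁))]⟩
      set τ₂ : ℝ := τ₁ * Real.exp u with hτ₂def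
      have hτ₂ : τ₁ ≤ τ₂ := by
        rw [hτ₂def]
        nlinarith [Real.one_le_exp hu1, hτ₁pos]
      have hlog2 : Real.log τ₂ - Real.log τ₁ = u := by
        rw [hτ₂def, Real.log_mul hτ₁pos.ne' (Real.exp_pos u).ne', Real.log_exp]; ring
      have hm2 : β < m τ₂ := by
        simp only [hmdef, hlog2]
        have h5 : 2 * (β - b τ₁) < u * (ε * b τ₁) := by
          rw [div_lt_iff₀ (by positivity)] at hu0; linarith
        nlinarith [h5]
      have h6 := hmb τ₂ hτ₂
      have h7 := hbb τ₂ (le_trans (le_max_left T τ₀) (hτ₁.trans hτ₂))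
      linarith
    -- package the decay into the required form
    have hcont : ContinuousOn a (Set.Icc (τ₀ + 1) (T' + 1)) := by
      intro x hx
      exact ((hdiff x (by linarith [hx.1])).continuousAt).continuousWithinAt
    have hne : (Set.Icc (τ₀ + 1) (T' + 1)).Nonempty :=
      Set.nonempty_Icc.2 (by linarith)
    obtain ⟨z, hz, hzmax⟩ := isCompact_Icc.exists_isMaxOn hne hcont
    set M : ℝ := a z with hMdef
    refine ⟨max K ((|M| + 1) * (T' + 1) ^ 2), ?_⟩
    intro τ hτ
    have hττ₀ : τ₀ ≤ τ := by linarith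
    have hτp := hτpos τ hττ₀
    have h2 : (0:ℝ) < τ ^ 2 := pow_pos hτp 2
    rw [le_div_iff₀ h2]
    by_cases hcase : τ ≤ T' + 1
    · have haM : a τ ≤ M := hzmax ⟨hτ, hcase⟩
      have hT1 : (0:ℝ) < T' + 1 := by linarith
      have hsq : τ ^ 2 ≤ (T' + 1) ^ 2 := by nlinarith
      have h3 : a τ * τ ^ 2 ≤ (|M| + 1) * (T' + 1) ^ 2 := by
        nlinarith [le_abs_self M, abs_nonneg M, h2.le]
      exact h3.trans (le_max_right _ _)
    · push_neg at hcase
      have hK2 : b τ ≤ K / τ := hdecay τ (by linarith)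
      have h6 : (τ * a τ) * τ ≤ K := by
        have := (le_div_iff₀ hτp).1 hK2
        simpa [hbdef] using this
      have h7 : K ≤ max K ((|M| + 1) * (T' + 1) ^ 2) := le_max_left _ _
      nlinarith [h6, h7]
  · -- generic case: τ · a(τ) → 1/8
    right
    push_neg at hP
    -- lower bound: for each 0 < β < 1/8, eventually β ≤ b τ
    have hlow : ∀ β : ℝ, 0 < β → β < 1 / 8 → ∃ T, ∀ τ, T ≤ τ → β ≤ b τ := by
      intro β hβ0 hβ
      have hδ : 0 < β * (1 - 8 * β) := by nlinarith
      obtain ⟨τ₁, hτ₁T, hβτ₁⟩ := hP β (max τ₀ (C / (β * (1 - 8 * β)) + 1)) hβ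
        (le_max_left _ _)
      refine ⟨τ₁, ?_⟩
      have hτ₁τ₀ : τ₀ ≤ τ₁ := (le_max_left _ _).trans hτ₁T
      have H := comp_le_aux (f := fun _ => β) (g := b) (x₀ := τ₁)
        (fun x _ => differentiableAt_const β)
        (fun x hx => hbdiff x (hτ₁τ₀.trans hx))
        (le_of_lt hβτ₁) ?_
      · exact fun τ hτ => H τ hτ
      · intro x hx heq
        rw [deriv_const]
        have hxτ₀ : τ₀ ≤ x := hτ₁τ₀.trans hx
        have hxp := hτpos x hxτ₀
        have h6 := hlb x hxτ₀
        rw [← heq] at h6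
        have hxT₂ : C / (β * (1 - 8 * β)) + 1 ≤ x :=
          (le_max_right _ _).trans (hτ₁T.trans hx)
        have hCx : C < β * (1 - 8 * β) * x := by
          have h8 : C / (β * (1 - 8 * β)) ≤ x - 1 := by linarith
          rw [div_le_iff₀ hδ] at h8
          nlinarith
        have e1 : C / x ^ 2 < (β * (1 - 8 * β)) / x := by
          rw [div_lt_div_iff₀ (pow_pos hxp 2) hxp]
          nlinarith
        have e2 : (β - 8 * β ^ 2) / x = (β * (1 - 8 * β)) / x := by ring_nf
        linarith
    -- upper bound: for each γ > 1/8, eventually b τ ≤ γ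
    have hupp : ∀ γ : ℝ, 1 / 8 < γ → ∃ T, ∀ τ, T ≤ τ → b τ ≤ γ := by
      intro γ hγ
      set κ : ℝ := γ * (8 * γ - 1) / 2 with hκdef
      have hκpos : 0 < κ := by rw [hκdef]; nlinarith
      set T₁ : ℝ := max τ₀ (C / κ + 1) with hT₁def
      have hT₁τ₀ : τ₀ ≤ T₁ := le_max_left _ _
      have hCκ : ∀ τ, T₁ ≤ τ → C / τ ≤ κ := by
        intro τ hτ
        have hτp := hτpos τ (hT₁τ₀.trans hτ)
        rw [div_le_iff₀ hτp]
        have h8 : C / κ + 1 ≤ τ := le_trans (le_max_right _ _) hτ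
        have h9 : C / κ ≤ τ - 1 := by linarith
        rw [div_le_iff₀ hκpos] at h9
        nlinarith
      have hCκ2 : ∀ τ, T₁ ≤ τ → C / τ ^ 2 ≤ κ / τ := by
        intro τ hτ
        have hτp := hτpos τ (hT₁τ₀.trans hτ)
        rw [div_le_div_iff₀ (pow_pos hτp 2) hτp]
        have := (div_le_iff₀ hτp).1 (hCκ τ hτ)
        nlinarith
      by_cases hA : ∃ τ₁, T₁ ≤ τ₁ ∧ b τ₁ ≤ γ
      · obtain ⟨τ₁, hτ₁T, hbγ⟩ := hA
        have hτ₁τ₀ : τ₀ ≤ τ₁ := hT₁τ₀.trans hτ₁T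
        refine ⟨τ₁, ?_⟩
        have H := comp_le_aux (f := b) (g := fun _ => γ) (x₀ := τ₁)
          (fun x hx => hbdiff x (hτ₁τ₀.trans hx))
          (fun x _ => differentiableAt_const γ)
          hbγ ?_
        · exact fun τ hτ => H τ hτ
        · intro x hx heq
          rw [deriv_const]
          have hxτ₀ : τ₀ ≤ x := hτ₁τ₀.trans hx
          have hxT₁ : T₁ ≤ x := hτ₁T.trans hx
          have hxp := hτpos x hxτ₀
          have h6 := hub x hxτ₀
          rw [heq] at h6
          have e1 : (γ - 8 * γ ^ 2) / x = -(2 * (κ / x)) := by rw [hκdef]; ring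
          have e2 := hCκ2 x hxT₁
          have hκx : 0 < κ / x := div_pos hκpos hxp
          linarith
      · push_neg at hA
        exfalso
        set F : ℝ → ℝ := fun τ => b τ + κ * Real.log τ with hFdef
        have hFderiv : ∀ τ, T₁ ≤ τ → HasDerivAt F (deriv b τ + κ * τ⁻¹) τ := by
          intro τ hτ
          exact ((hbdiff τ (hT₁τ₀.trans hτ)).hasDerivAt).add
            ((Real.hasDerivAt_log (hτpos τ (hT₁τ₀.trans hτ)).ne').const_mul κ)
        have hF0 : ∀ τ, T₁ ≤ τ → deriv b τ + κ * τ⁻¹ ≤ 0 := by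
          intro τ hτ
          have hxτ₀ : τ₀ ≤ τ := hT₁τ₀.trans hτ
          have hxp := hτpos τ hxτ₀
          have h6 := hub τ hxτ₀
          have hγb := hA τ hτ
          have e2 := hCκ2 τ hτ
          have e5 : (b τ - 8 * (b τ) ^ 2) / τ ≤ -(2 * (κ / τ)) := by
            have h10 : b τ - 8 * (b τ) ^ 2 ≤ -(2 * κ) := by rw [hκdef]; nlinarith
            calc (b τ - 8 * (b τ) ^ 2) / τ ≤ (-(2 * κ)) / τ :=
                  (div_le_div_iff_of_pos_right hxp).2 h10
              _ = -(2 * (κ / τ)) := by ring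
          have e6 : κ * τ⁻¹ = κ / τ := by ring
          linarith
        have hanti : AntitoneOn F (Set.Ici T₁) := by
          apply antitoneOn_of_deriv_nonpos (convex_Ici T₁)
          · intro x hx
            exact ((hFderiv x hx).differentiableAt).continuousAt.continuousWithinAt
          · intro x hx
            rw [interior_Ici] at hx
            exact ((hFderiv x hx.le).differentiableAt).differentiableWithinAt
          · intro x hx
            rw [interior_Ici] at hx
            rw [(hFderiv x hx.le).deriv]
            exact hF0 x hx.le
        set u : ℝ := (F T₁ - γ) / κ with hudef
        set τ₂ : ℝ := max T₁ (Real.exp u + 1) with hτ₂def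
        have hτ₂T₁ : T₁ ≤ τ₂ := le_max_left _ _
        have hlog2 : u < Real.log τ₂ := by
          have h8 : Real.exp u + 1 ≤ τ₂ := le_max_right _ _
          calc u = Real.log (Real.exp u) := (Real.log_exp u).symm
            _ < Real.log τ₂ := Real.log_lt_log (Real.exp_pos u) (by linarith)
        have h9 : F τ₂ ≤ F T₁ := hanti Set.self_mem_Ici hτ₂T₁ hτ₂T₁
        have h10 : γ < b τ₂ := hA τ₂ hτ₂T₁
        have h11 : κ * u < κ * Real.log τ₂ := mul_lt_mul_of_pos_left hlog2 hκpos
        have h12 : κ * u = F T₁ - γ := by rw [hudef]; field_simp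
        have h13 : F τ₂ = b τ₂ + κ * Real.log τ₂ := rfl
        linarith
    -- combine
    refine tendsto_order.2 ⟨?_, ?_⟩
    · intro x hx
      have hβ0 : (0:ℝ) < max (1 / 16) ((x + 1 / 8) / 2) :=
        lt_of_lt_of_le (by norm_num) (le_max_left _ _)
      have hβlt : max (1 / 16) ((x + 1 / 8) / 2) < 1 / 8 :=
        max_lt (by norm_num) (by linarith)
      have hxβ : x < max (1 / 16) ((x + 1 / 8) / 2) :=
        lt_of_lt_of_le (by linarith) (le_max_right _ _)
      obtain ⟨T, hT⟩ := hlow _ hβ0 hβlt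
      filter_upwards [eventually_ge_atTop T] with τ hτ
      exact lt_of_lt_of_le hxβ (hT τ hτ)
    · intro x hx
      obtain ⟨T, hT⟩ := hupp ((x + 1 / 8) / 2) (by linarith)
      filter_upwards [eventually_ge_atTop T] with τ hτ
      exact lt_of_le_of_lt (hT τ hτ) (by linarith)
end

section
/- Let Q : ℝ → ℝ be twice differentiable, let A > 0 and τ₁ > 0, and define ρ₁(τ) = e^{(τ−τ₁)/2} · A/√τ₁ and q₀(ρ, τ) = ρ₁(τ)² · Q(ρ/ρ₁(τ)). Then for all ρ ∈ ℝ and all τ > 0, ∂_τ q₀(ρ,τ) − (1/τ) ∂²_ρ q₀(ρ,τ) + (ρ/2) ∂_ρ q₀(ρ,τ) − q₀(ρ,τ) = −(1/τ) Q''(ρ/ρ₁(τ)). -/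
/-!
Write `b = ρ₁(τ)` and `x = ρ/b`. In space, `q₀(·, τ)` is the rescaling `b² Q(·/b)`, so
`∂_ρ q₀ = b Q'(x)` and `∂²_ρ q₀ = Q''(x)`. In time, `ρ₁` grows like `e^{τ/2}`, i.e. `ρ₁' = ρ₁/2`,
and the chain rule gives `∂_τ q₀ = b² Q(x) - (ρ/2) b Q'(x)`. The transport term `(ρ/2) ∂_ρ q₀`
and the reaction term `-q₀` cancel this exactly, leaving only the diffusion `-(1/τ) Q''(x)`.
-/

section Rescaling

variable {𝕜 : Type*} [NontriviallyNormedField 𝕜]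

theorem deriv_comp_div_const {E : Type*} [NormedAddCommGroup E] [NormedSpace 𝕜 E]
    (f : 𝕜 → E) (b x : 𝕜) : deriv (fun r => f (r / b)) x = b⁻¹ • deriv f (x / b) := by
  simpa only [div_eq_inv_mul] using deriv_comp_mul_left b⁻¹ f x

theorem deriv_sq_mul_comp_div (Q : 𝕜 → 𝕜) (b : 𝕜) :
    deriv (fun r => b ^ 2 * Q (r / b)) = fun r => b * deriv Q (r / b) := by
  funext r
  rw [deriv_const_mul_field, deriv_comp_div_const, smul_eq_mul, ← mul_assoc, sq,
    mul_self_mul_inv]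

theorem deriv_mul_comp_div {b : 𝕜} (hb : b ≠ 0) (g : 𝕜 → 𝕜) (x : 𝕜) :
    deriv (fun r => b * g (r / b)) x = deriv g (x / b) := by
  rw [deriv_const_mul_field, deriv_comp_div_const, smul_eq_mul, mul_inv_cancel_left₀ hb]

theorem hasDerivAt_sq_mul_comp_div {Q b : 𝕜 → 𝕜} {b' ρ τ : 𝕜} (hb : HasDerivAt b b' τ)
    (hbτ : b τ ≠ 0) (hQ : DifferentiableAt 𝕜 Q (ρ / b τ)) :
    HasDerivAt (fun t => b t ^ 2 * Q (ρ / b t))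
      (b' * (2 * b τ * Q (ρ / b τ) - ρ * deriv Q (ρ / b τ))) τ := by
  have hquot : HasDerivAt (fun t => ρ / b t) (-(ρ * b') / b τ ^ 2) τ := by
    simpa using (hasDerivAt_const τ ρ).fun_div hb hbτ
  refine ((hb.fun_pow 2).fun_mul (hQ.hasDerivAt.comp τ hquot)).congr_deriv ?_
  rw [Function.comp_apply]
  field_simp
  ring

end Rescaling

theorem expanding_profile_almost_null_general (Q : ℝ → ℝ)
    (hQ : Differentiable ℝ Q)
    (A τ₁ : ℝ) (hA : 0 < A) (hτ₁ : 0 < τ₁)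
    (ρ₁ : ℝ → ℝ) (hρ₁ : ∀ τ, ρ₁ τ = Real.exp ((τ - τ₁) / 2) * A / Real.sqrt τ₁)
    (q₀ : ℝ → ℝ → ℝ) (hq₀ : ∀ ρ τ, q₀ ρ τ = (ρ₁ τ) ^ 2 * Q (ρ / ρ₁ τ)) :
    ∀ ρ τ : ℝ, 0 < τ →
      deriv (fun t => q₀ ρ t) τ
        - (1 / τ) * deriv (deriv (fun r => q₀ r τ)) ρ
        + (ρ / 2) * deriv (fun r => q₀ r τ) ρ
        - q₀ ρ τ
      = -(1 / τ) * deriv (deriv Q) (ρ / ρ₁ τ) := by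
  intro ρ τ _
  have hρ₁τ : ρ₁ τ ≠ 0 := by rw [hρ₁]; positivity
  have hρ₁' : HasDerivAt ρ₁ (ρ₁ τ / 2) τ := by
    rw [funext hρ₁]
    refine (((((hasDerivAt_id' τ).sub_const τ₁).div_const 2).exp.mul_const A).div_const
      (Real.sqrt τ₁)).congr_deriv ?_
    ring
  have hspace : (fun r => q₀ r τ) = fun r => ρ₁ τ ^ 2 * Q (r / ρ₁ τ) := funext fun r => hq₀ r τ
  have htime : (fun t => q₀ ρ t) = fun t => ρ₁ t ^ 2 * Q (ρ / ρ₁ t) := funext (hq₀ ρ)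
  rw [htime, (hasDerivAt_sq_mul_comp_div hρ₁' hρ₁τ (hQ _)).deriv, hspace, deriv_sq_mul_comp_div,
    deriv_mul_comp_div hρ₁τ, hq₀]
  ring

/-- With `ρ₁(τ) = e^{(τ-τ₁)/2} A/√τ₁` and `q₀(ρ,τ) = ρ₁(τ)² Q(ρ/ρ₁(τ))` for a twice
differentiable `Q`, the self-similarly expanding profile `q₀` satisfies
`ℒ[q₀] = ∂_τ q₀ - (1/τ) ∂²_ρ q₀ + (ρ/2) ∂_ρ q₀ - q₀ = -(1/τ) Q''(ρ/ρ₁(τ))`. -/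
theorem expanding_profile_almost_null (Q : ℝ → ℝ)
    (hQ : Differentiable ℝ Q) (hQ' : Differentiable ℝ (deriv Q))
    (A τ₁ : ℝ) (hA : 0 < A) (hτ₁ : 0 < τ₁)
    (ρ₁ : ℝ → ℝ) (hρ₁ : ∀ τ, ρ₁ τ = Real.exp ((τ - τ₁) / 2) * A / Real.sqrt τ₁)
    (q₀ : ℝ → ℝ → ℝ) (hq₀ : ∀ ρ τ, q₀ ρ τ = (ρ₁ τ) ^ 2 * Q (ρ / ρ₁ τ)) :
    ∀ ρ τ : ℝ, 0 < τ →
      deriv (fun t => q₀ ρ t) τ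
        - (1 / τ) * deriv (deriv (fun r => q₀ r τ)) ρ
        + (ρ / 2) * deriv (fun r => q₀ r τ) ρ
        - q₀ ρ τ
      = -(1 / τ) * deriv (deriv Q) (ρ / ρ₁ τ) :=
  expanding_profile_almost_null_general Q hQ A τ₁ hA hτ₁ ρ₁ hρ₁ q₀ hq₀
end

section
/- Let n be a natural number with n ≥ 3, and let c, C ∈ ℝ. On the set of τ with c + 2τ > 0, define v₂(τ) = (n−1)/(c+2τ) and u₀(τ) = −(n/(n−2)) · 1/(c+2τ) + C · (c+2τ)^{−n/2}. Then for all such τ: (i) v₂'(τ) = −(2/(n−1)) v₂(τ)², and (ii) u₀'(τ) = −(n/(n−1)²) · ( (n−1) u₀(τ) v₂(τ) + v₂(τ)² ). -/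
/-!
Write `s = c + 2τ`, so that `(s ^ p)' = 2 p s ^ p / s`. With `p = -1` this gives the Riccati
equation for `v₂ = (n - 1) / s`. Substituting `v₂`, the equation for `u₀` becomes the linear
equation `u₀' = -(n / s) u₀ - n / s²`: its homogeneous solutions are `C s ^ (-n/2)`, and
`-(n / (n - 2)) / s` is a particular solution (this is where `n ≠ 2` enters).
-/

section AffineSubstitution

variable (c k τ : ℝ)

theorem hasDerivAt_affine : HasDerivAt (fun t : ℝ => c + k * t) k τ := by
  simpa using ((hasDerivAt_id τ).const_mul k).const_add c

theorem hasDerivAt_const_div_affine (a : ℝ) (hs : c + k * τ ≠ 0) :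
    HasDerivAt (fun t : ℝ => a / (c + k * t)) (-k * (a / (c + k * τ)) / (c + k * τ)) τ := by
  refine ((hasDerivAt_const τ a).div (hasDerivAt_affine c k τ) hs).congr_deriv ?_
  field_simp
  ring

theorem hasDerivAt_rpow_affine (p : ℝ) (hs : c + k * τ ≠ 0) :
    HasDerivAt (fun t : ℝ => (c + k * t) ^ p) (k * p * (c + k * τ) ^ p / (c + k * τ)) τ := by
  refine ((hasDerivAt_affine c k τ).rpow_const (Or.inl hs)).congr_deriv ?_
  rw [Real.rpow_sub_one hs, mul_div_assoc]

end AffineSubstitution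

/-- Explicit solution of the formal center-manifold ODE system in dimensions `n ≥ 3`:
with `v₂(τ) = (n−1)/(c+2τ)` and `u₀(τ) = −(n/(n−2))/(c+2τ) + C (c+2τ)^{−n/2}`, on
`{τ : c+2τ > 0}` one has `v₂' = −(2/(n−1)) v₂²` and
`u₀' = −(n/(n−1)²)((n−1) u₀ v₂ + v₂²)`. -/
theorem center_manifold_ode_solution (n : ℕ) (hn : 3 ≤ n) (c C : ℝ) (τ : ℝ)
    (hτ : 0 < c + 2 * τ) :
    HasDerivAt (fun t : ℝ => ((n : ℝ) - 1) / (c + 2 * t))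
        (-(2 / ((n : ℝ) - 1)) * (((n : ℝ) - 1) / (c + 2 * τ)) ^ 2) τ ∧
      HasDerivAt
        (fun t : ℝ => -((n : ℝ) / ((n : ℝ) - 2)) * (1 / (c + 2 * t))
          + C * (c + 2 * t) ^ (-(n : ℝ) / 2))
        (-((n : ℝ) / ((n : ℝ) - 1) ^ 2) *
          (((n : ℝ) - 1) *
              (-((n : ℝ) / ((n : ℝ) - 2)) * (1 / (c + 2 * τ))
                + C * (c + 2 * τ) ^ (-(n : ℝ) / 2)) *
              (((n : ℝ) - 1) / (c + 2 * τ))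
            + (((n : ℝ) - 1) / (c + 2 * τ)) ^ 2)) τ := by
  have hs : c + 2 * τ ≠ 0 := hτ.ne'
  have hn' : (3 : ℝ) ≤ n := by exact_mod_cast hn
  have hn1 : (n : ℝ) - 1 ≠ 0 := by linarith
  have hn2 : (n : ℝ) - 2 ≠ 0 := by linarith
  constructor
  · refine (hasDerivAt_const_div_affine c 2 τ _ hs).congr_deriv ?_
    field_simp
  · have particular := (hasDerivAt_const_div_affine c 2 τ 1 hs).const_mul (-((n : ℝ) / (n - 2)))
    have homogeneous := (hasDerivAt_rpow_affine c 2 τ (-(n : ℝ) / 2) hs).const_mul C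
    refine (particular.add homogeneous).congr_deriv ?_
    field_simp
    ring
end

section
/- Let n ≥ 2 be a natural number and C₀ ≥ 1. Then there exists a constant C₁, depending only on n and C₀, with the following property. For every τ ≥ 1, every S > 0, and every continuously differentiable function v : ℝ → ℝ satisfying v(σ) ≥ −1/2, |v(σ)| ≤ C₀(1+σ²)/τ, and |v'(σ)| ≤ C₀(1+|σ|)/τ for all |σ| ≤ S, one has for all |σ| ≤ S: | −n v'(σ) ∫₀^σ v'(s)²/(1+v(s))² ds − ( v'(σ)² + (1/2) v(σ)² ) / (1+v(σ)) | ≤ C₁ (1+σ⁴)/τ². -/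
private lemma poly1 (x : ℝ) (hx : 0 ≤ x) : x * (1 + x) ^ 3 ≤ 8 * (1 + x ^ 4) := by
  nlinarith [sq_nonneg (x - 1), sq_nonneg (x ^ 2 - 1), sq_nonneg (x ^ 2 - x), sq_nonneg x, sq_nonneg (x ^ 2 - x - 1)]

private lemma poly2 (x : ℝ) (hx : 0 ≤ x) : (1 + x) ^ 2 ≤ 4 * (1 + x ^ 4) := by
  nlinarith [sq_nonneg (x - 1), sq_nonneg (x ^ 2 - 1), sq_nonneg x]

private lemma poly3 (x : ℝ) : (1 + x ^ 2) ^ 2 ≤ 2 * (1 + x ^ 4) := by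
  nlinarith [sq_nonneg (x ^ 2 - 1)]

/-- Quadratic smallness of the full nonlinear term of the rescaled neckpinch equation:
for `n ≥ 2` and `C₀ ≥ 1` there is `C₁` (depending only on `n`, `C₀`) such that whenever
`τ ≥ 1`, `S > 0`, and `v` is `C¹` with `v ≥ −1/2`, `|v| ≤ C₀(1+σ²)/τ`,
`|v'| ≤ C₀(1+|σ|)/τ` on `|σ| ≤ S`, then on `|σ| ≤ S`
`|N(v)(σ)| ≤ C₁ (1+σ⁴)/τ²`, where
`N(v)(σ) = −n v'(σ) ∫₀^σ v'²/(1+v)² − (v'(σ)² + v(σ)²/2)/(1+v(σ))`. -/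
theorem nonlinear_term_quadratic_bound (n : ℕ) (hn : 2 ≤ n) (C₀ : ℝ) (hC₀ : 1 ≤ C₀) :
    ∃ C₁ : ℝ, ∀ τ : ℝ, 1 ≤ τ → ∀ S : ℝ, 0 < S → ∀ v : ℝ → ℝ, ContDiff ℝ 1 v →
      (∀ σ : ℝ, |σ| ≤ S → -(1 / 2) ≤ v σ) →
      (∀ σ : ℝ, |σ| ≤ S → |v σ| ≤ C₀ * (1 + σ ^ 2) / τ) →
      (∀ σ : ℝ, |σ| ≤ S → |deriv v σ| ≤ C₀ * (1 + |σ|) / τ) →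
      ∀ σ : ℝ, |σ| ≤ S →
        |(-(n : ℝ)) * deriv v σ * (∫ s in (0 : ℝ)..σ, (deriv v s) ^ 2 / (1 + v s) ^ 2)
            - ((deriv v σ) ^ 2 + (1 / 2) * (v σ) ^ 2) / (1 + v σ)|
          ≤ C₁ * (1 + σ ^ 4) / τ ^ 2 := by
  refine ⟨64 * ((n : ℝ) + 1) * C₀ ^ 3, ?_⟩
  intro τ hτ S hS v hv hlow hvb hdb σ hσ
  have hτ0 : (0:ℝ) < τ := lt_of_lt_of_le one_pos hτ
  set x := |σ| with hxdef
  have hx0 : 0 ≤ x := abs_nonneg σ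
  have hx2 : σ ^ 2 = x ^ 2 := (sq_abs σ).symm
  have hC00 : (0:ℝ) < C₀ := lt_of_lt_of_le one_pos hC₀
  -- bound on the integrand
  have hM : ∀ s ∈ Set.uIoc (0:ℝ) σ,
      ‖(deriv v s) ^ 2 / (1 + v s) ^ 2‖ ≤ 4 * C₀ ^ 2 * (1 + x) ^ 2 / τ ^ 2 := by
    intro s hs
    have hsx : |s| ≤ x := by
      rcases Set.mem_uIoc.mp hs with h | h
      · rw [abs_of_pos h.1]
        exact le_trans h.2 (le_abs_self σ)
      · rw [abs_of_nonpos h.2]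
        calc -s ≤ -σ := by linarith [h.1]
        _ ≤ |σ| := neg_le_abs σ
    have hsS : |s| ≤ S := le_trans hsx hσ
    have hd : |deriv v s| ≤ C₀ * (1 + x) / τ := by
      refine le_trans (hdb s hsS) ?_
      gcongr
    have hl : (1:ℝ)/2 ≤ 1 + v s := by linarith [hlow s hsS]
    have hden : (1:ℝ)/4 ≤ (1 + v s) ^ 2 := by nlinarith
    have hnum : (deriv v s) ^ 2 ≤ (C₀ * (1 + x) / τ) ^ 2 := by
      rw [← sq_abs]
      exact pow_le_pow_left₀ (abs_nonneg _) hd 2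
    have h1 : (deriv v s) ^ 2 / (1 + v s) ^ 2 ≤ (deriv v s) ^ 2 / (1/4) :=
      div_le_div_of_nonneg_left (sq_nonneg _) (by norm_num) hden
    have h2 : (deriv v s) ^ 2 / (1/4) = 4 * (deriv v s) ^ 2 := by ring
    rw [Real.norm_eq_abs, abs_of_nonneg (by positivity)]
    calc (deriv v s) ^ 2 / (1 + v s) ^ 2 ≤ 4 * (deriv v s) ^ 2 := by rw [← h2]; exact h1
    _ ≤ 4 * (C₀ * (1 + x) / τ) ^ 2 := by linarith
    _ = 4 * C₀ ^ 2 * (1 + x) ^ 2 / τ ^ 2 := by ring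
  have hI : |∫ s in (0:ℝ)..σ, (deriv v s) ^ 2 / (1 + v s) ^ 2|
      ≤ 4 * C₀ ^ 2 * (1 + x) ^ 2 / τ ^ 2 * x := by
    have := intervalIntegral.norm_integral_le_of_norm_le_const hM
    simpa [Real.norm_eq_abs] using this
  -- bounds at σ
  have hd : |deriv v σ| ≤ C₀ * (1 + x) / τ := hdb σ hσ
  have hvσ : |v σ| ≤ C₀ * (1 + x ^ 2) / τ := by rw [← hx2]; exact hvb σ hσ
  have hl : (1:ℝ)/2 ≤ 1 + v σ := by linarith [hlow σ hσ]
  have hd2 : (deriv v σ) ^ 2 ≤ (C₀ * (1 + x) / τ) ^ 2 := by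
    rw [← sq_abs]; exact pow_le_pow_left₀ (abs_nonneg _) hd 2
  have hv2 : (v σ) ^ 2 ≤ (C₀ * (1 + x ^ 2) / τ) ^ 2 := by
    rw [← sq_abs]; exact pow_le_pow_left₀ (abs_nonneg _) hvσ 2
  -- second term bound
  have hB : |((deriv v σ) ^ 2 + (1 / 2) * (v σ) ^ 2) / (1 + v σ)|
      ≤ 2 * ((C₀ * (1 + x) / τ) ^ 2 + (1/2) * (C₀ * (1 + x ^ 2) / τ) ^ 2) := by
    have hnum0 : (0:ℝ) ≤ (deriv v σ) ^ 2 + (1 / 2) * (v σ) ^ 2 := by positivity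
    rw [abs_of_nonneg (div_nonneg hnum0 (by linarith))]
    calc ((deriv v σ) ^ 2 + (1 / 2) * (v σ) ^ 2) / (1 + v σ)
        ≤ ((deriv v σ) ^ 2 + (1 / 2) * (v σ) ^ 2) / (1/2) :=
          div_le_div_of_nonneg_left hnum0 (by norm_num) hl
      _ = 2 * ((deriv v σ) ^ 2 + (1/2) * (v σ) ^ 2) := by ring
      _ ≤ 2 * ((C₀ * (1 + x) / τ) ^ 2 + (1/2) * (C₀ * (1 + x ^ 2) / τ) ^ 2) := by linarith
  -- first term bound
  have hA : |(-(n : ℝ)) * deriv v σ * (∫ s in (0:ℝ)..σ, (deriv v s) ^ 2 / (1 + v s) ^ 2)|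
      ≤ (n : ℝ) * (C₀ * (1 + x) / τ) * (4 * C₀ ^ 2 * (1 + x) ^ 2 / τ ^ 2 * x) := by
    rw [abs_mul, abs_mul, abs_neg, abs_of_nonneg (by positivity : (0:ℝ) ≤ (n:ℝ))]
    have h0 : (0:ℝ) ≤ |deriv v σ| := abs_nonneg _
    gcongr <;> first | exact le_trans (abs_nonneg _) hd | exact hd | exact hI | positivity
  -- combine
  have htri : |(-(n : ℝ)) * deriv v σ * (∫ s in (0:ℝ)..σ, (deriv v s) ^ 2 / (1 + v s) ^ 2)
        - ((deriv v σ) ^ 2 + (1 / 2) * (v σ) ^ 2) / (1 + v σ)|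
      ≤ (n : ℝ) * (C₀ * (1 + x) / τ) * (4 * C₀ ^ 2 * (1 + x) ^ 2 / τ ^ 2 * x)
        + 2 * ((C₀ * (1 + x) / τ) ^ 2 + (1/2) * (C₀ * (1 + x ^ 2) / τ) ^ 2) := by
    refine le_trans (abs_sub _ _) (add_le_add hA hB)
  refine le_trans htri ?_
  have hx4 : σ ^ 4 = x ^ 4 := by
    rw [hxdef, ← abs_pow, abs_of_nonneg (by positivity : (0:ℝ) ≤ σ ^ 4)]
  rw [hx4]
  -- now a pure algebraic inequality in x, τ, C₀, n
  have hτ2 : (0:ℝ) < τ ^ 2 := by positivity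
  have hτ3 : τ ^ 2 ≤ τ ^ 3 := pow_le_pow_right₀ hτ (by norm_num)
  have e1 : (n : ℝ) * (C₀ * (1 + x) / τ) * (4 * C₀ ^ 2 * (1 + x) ^ 2 / τ ^ 2 * x)
      = 4 * (n:ℝ) * C₀ ^ 3 * (x * (1 + x) ^ 3) / τ ^ 3 := by ring
  have p1 := poly1 x hx0
  have p2 := poly2 x hx0
  have p3 := poly3 x
  have hC3 : C₀ ^ 2 ≤ C₀ ^ 3 := pow_le_pow_right₀ hC₀ (by norm_num)
  have hn2 : (2:ℝ) ≤ (n:ℝ) := by exact_mod_cast hn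
  have b1 : 4 * (n:ℝ) * C₀ ^ 3 * (x * (1 + x) ^ 3) / τ ^ 3
      ≤ 32 * (n:ℝ) * C₀ ^ 3 * (1 + x ^ 4) / τ ^ 2 := by
    have : 4 * (n:ℝ) * C₀ ^ 3 * (x * (1 + x) ^ 3) ≤ 32 * (n:ℝ) * C₀ ^ 3 * (1 + x ^ 4) := by
      have h := mul_le_mul_of_nonneg_left p1 (show (0:ℝ) ≤ 4 * (n:ℝ) * C₀ ^ 3 by positivity)
      linarith
    exact div_le_div₀ (by positivity) this hτ2 hτ3
  have b2 : 2 * ((C₀ * (1 + x) / τ) ^ 2 + (1/2) * (C₀ * (1 + x ^ 2) / τ) ^ 2)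
      ≤ 10 * C₀ ^ 3 * (1 + x ^ 4) / τ ^ 2 := by
    have e2 : 2 * ((C₀ * (1 + x) / τ) ^ 2 + (1/2) * (C₀ * (1 + x ^ 2) / τ) ^ 2)
        = (2 * C₀ ^ 2 * (1 + x) ^ 2 + C₀ ^ 2 * (1 + x ^ 2) ^ 2) / τ ^ 2 := by ring
    rw [e2]
    have hnum : 2 * C₀ ^ 2 * (1 + x) ^ 2 + C₀ ^ 2 * (1 + x ^ 2) ^ 2
        ≤ 10 * C₀ ^ 3 * (1 + x ^ 4) := by
      have h2 := mul_le_mul hC3 p2 (by positivity : (0:ℝ) ≤ (1 + x) ^ 2) (by positivity : (0:ℝ) ≤ C₀ ^ 3)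
      have h3 := mul_le_mul hC3 p3 (by positivity : (0:ℝ) ≤ (1 + x ^ 2) ^ 2) (by positivity : (0:ℝ) ≤ C₀ ^ 3)
      linarith
    gcongr
  rw [e1]
  refine le_trans (add_le_add b1 b2) ?_
  have hfin : 32 * (n:ℝ) * C₀ ^ 3 * (1 + x ^ 4) + 10 * C₀ ^ 3 * (1 + x ^ 4)
      ≤ 64 * ((n : ℝ) + 1) * C₀ ^ 3 * (1 + x ^ 4) := by
    have h := mul_nonneg (pow_nonneg (le_of_lt hC00) 3) (by positivity : (0:ℝ) ≤ 1 + x ^ 4)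
    have h2 := mul_le_mul_of_nonneg_right hn2 h
    linarith
  calc 32 * (n:ℝ) * C₀ ^ 3 * (1 + x ^ 4) / τ ^ 2 + 10 * C₀ ^ 3 * (1 + x ^ 4) / τ ^ 2
      = (32 * (n:ℝ) * C₀ ^ 3 * (1 + x ^ 4) + 10 * C₀ ^ 3 * (1 + x ^ 4)) / τ ^ 2 := by ring
    _ ≤ 64 * ((n : ℝ) + 1) * C₀ ^ 3 * (1 + x ^ 4) / τ ^ 2 := by gcongr
end

section
/- Let n ≥ 2 be a natural number and C₀ ≥ 1. Then there exists a constant C₁, depending only on n and C₀, with the following property. For every τ ≥ 1, every S > 0, and every continuously differentiable function v : ℝ → ℝ satisfying v(σ) ≥ −1/2, |v(σ)| ≤ C₀(1+σ²)/τ, and |v'(σ)| ≤ C₀(1+|σ|)/τ for all |σ| ≤ S, one has for all |σ| ≤ S: | −n v'(σ) ∫₀^σ v'(s)²/(1+v(s))² ds + ( v(σ) v'(σ)² + (1/2) v(σ)³ ) / (1+v(σ)) | ≤ C₁ (1+σ⁶)/τ³. -/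
set_option maxHeartbeats 1000000

lemma pow_le_one_add_pow_six (t : ℝ) (ht : 0 ≤ t) (k : ℕ) (hk : k ≤ 6) :
    t ^ k ≤ 1 + t ^ 6 := by
  rcases le_total t 1 with h | h
  · calc t ^ k ≤ 1 := pow_le_one₀ ht h
      _ ≤ 1 + t ^ 6 := le_add_of_nonneg_right (by positivity)
  · calc t ^ k ≤ t ^ 6 := pow_le_pow_right₀ h hk
      _ ≤ 1 + t ^ 6 := by linarith

/-- Cubic smallness of the higher-order part `N₃(v)` of the nonlinearity of the rescaled
neckpinch equation: for `n ≥ 2` and `C₀ ≥ 1` there is `C₁` (depending only on `n`, `C₀`)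
such that whenever `τ ≥ 1`, `S > 0`, and `v` is `C¹` with `v ≥ −1/2`,
`|v| ≤ C₀(1+σ²)/τ`, `|v'| ≤ C₀(1+|σ|)/τ` on `|σ| ≤ S`, then on `|σ| ≤ S`
`|N₃(v)(σ)| ≤ C₁ (1+σ⁶)/τ³`, where
`N₃(v)(σ) = −n v'(σ) ∫₀^σ v'²/(1+v)² + (v v'² + v³/2)/(1+v)`. -/
theorem nonlinear_term_cubic_bound (n : ℕ) (hn : 2 ≤ n) (C₀ : ℝ) (hC₀ : 1 ≤ C₀) :
    ∃ C₁ : ℝ, ∀ τ : ℝ, 1 ≤ τ → ∀ S : ℝ, 0 < S → ∀ v : ℝ → ℝ, ContDiff ℝ 1 v →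
      (∀ σ : ℝ, |σ| ≤ S → -(1 / 2) ≤ v σ) →
      (∀ σ : ℝ, |σ| ≤ S → |v σ| ≤ C₀ * (1 + σ ^ 2) / τ) →
      (∀ σ : ℝ, |σ| ≤ S → |deriv v σ| ≤ C₀ * (1 + |σ|) / τ) →
      ∀ σ : ℝ, |σ| ≤ S →
        |(-(n : ℝ)) * deriv v σ * (∫ s in (0 : ℝ)..σ, (deriv v s) ^ 2 / (1 + v s) ^ 2)
            + (v σ * (deriv v σ) ^ 2 + (1 / 2) * (v σ) ^ 3) / (1 + v σ)|
          ≤ C₁ * (1 + σ ^ 6) / τ ^ 3 := by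
  refine ⟨100 * ((n : ℝ) + 1) * C₀ ^ 3, ?_⟩
  intro τ hτ S hS v hv hlow hA hB σ hσ
  have hτ0 : (0:ℝ) < τ := lt_of_lt_of_le one_pos hτ
  have hC0 : (0:ℝ) < C₀ := lt_of_lt_of_le one_pos hC₀
  have hn0 : (0:ℝ) ≤ (n:ℝ) := Nat.cast_nonneg n
  set t : ℝ := |σ| with ht
  have ht0 : (0:ℝ) ≤ t := abs_nonneg σ
  set B : ℝ := C₀ * (1 + t) / τ with hBdef
  set A : ℝ := C₀ * (1 + t ^ 2) / τ with hAdef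
  have hB0 : 0 ≤ B := by positivity
  have hA0 : 0 ≤ A := by positivity
  have hσ2 : σ ^ 2 = t ^ 2 := (sq_abs σ).symm
  have hσ6 : σ ^ 6 = t ^ 6 := by
    rw [ht, ← abs_pow, abs_of_nonneg (by positivity)]
  have hdσ : |deriv v σ| ≤ B := hB σ hσ
  have hvσ : |v σ| ≤ A := by rw [hAdef, ← hσ2]; exact hA σ hσ
  have hvlow : -(1/2 : ℝ) ≤ v σ := hlow σ hσ
  have h1v : (1/2 : ℝ) ≤ 1 + v σ := by linarith
  have h1v0 : (0:ℝ) < 1 + v σ := by linarith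
  set I : ℝ := ∫ s in (0:ℝ)..σ, (deriv v s) ^ 2 / (1 + v s) ^ 2 with hIdef
  -- integral bound
  have hint : |I| ≤ 4 * B ^ 2 * t := by
    have hb : ∀ s ∈ Set.uIoc (0:ℝ) σ,
        ‖(deriv v s) ^ 2 / (1 + v s) ^ 2‖ ≤ 4 * B ^ 2 := by
      intro s hs
      have hsle : |s| ≤ t := by
        rcases Set.mem_uIoc.mp hs with ⟨h1, h2⟩ | ⟨h1, h2⟩
        · rw [abs_of_pos h1]; exact h2.trans (le_abs_self σ)
        · rw [abs_of_nonpos h2]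
          calc -s ≤ -σ := by linarith
            _ ≤ |σ| := neg_le_abs σ
      have hsS : |s| ≤ S := hsle.trans hσ
      have hd : |deriv v s| ≤ B := by
        calc |deriv v s| ≤ C₀ * (1 + |s|) / τ := hB s hsS
          _ ≤ C₀ * (1 + t) / τ := by gcongr
      have hd2 : (deriv v s) ^ 2 ≤ B ^ 2 := by
        rw [← sq_abs]; exact pow_le_pow_left₀ (abs_nonneg _) hd 2
      have h1 : (1/2:ℝ) ≤ 1 + v s := by have := hlow s hsS; linarith
      have hden : (0:ℝ) < (1 + v s) ^ 2 := by positivity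
      rw [Real.norm_eq_abs, abs_of_nonneg (by positivity)]
      rw [div_le_iff₀ hden]
      have hq : (1/4:ℝ) ≤ (1 + v s) ^ 2 := by nlinarith
      have hm := mul_le_mul_of_nonneg_left hq (by positivity : (0:ℝ) ≤ 4 * B ^ 2)
      nlinarith [hd2]
    have := intervalIntegral.norm_integral_le_of_norm_le_const hb
    simpa [hIdef, Real.norm_eq_abs, ht, mul_comm] using this
  have hd2 : (deriv v σ) ^ 2 ≤ B ^ 2 := by
    rw [← sq_abs]; exact pow_le_pow_left₀ (abs_nonneg _) hdσ 2
  have hv3 : |v σ| ^ 3 ≤ A ^ 3 := pow_le_pow_left₀ (abs_nonneg _) hvσ 3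
  have habs : |(-(n : ℝ)) * deriv v σ * I
        + (v σ * (deriv v σ) ^ 2 + (1 / 2) * (v σ) ^ 3) / (1 + v σ)|
      ≤ (n:ℝ) * |deriv v σ| * |I|
        + 2 * (|v σ| * (deriv v σ) ^ 2 + (1/2) * |v σ| ^ 3) := by
    calc |(-(n : ℝ)) * deriv v σ * I
          + (v σ * (deriv v σ) ^ 2 + (1 / 2) * (v σ) ^ 3) / (1 + v σ)|
        ≤ |(-(n : ℝ)) * deriv v σ * I|
          + |(v σ * (deriv v σ) ^ 2 + (1 / 2) * (v σ) ^ 3) / (1 + v σ)| := abs_add_le _ _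
      _ ≤ (n:ℝ) * |deriv v σ| * |I|
          + 2 * (|v σ| * (deriv v σ) ^ 2 + (1/2) * |v σ| ^ 3) := by
          have e1 : |(-(n : ℝ)) * deriv v σ * I| = (n:ℝ) * |deriv v σ| * |I| := by
            rw [abs_mul, abs_mul, abs_neg, Nat.abs_cast]
          have e2 : |(v σ * (deriv v σ) ^ 2 + (1 / 2) * (v σ) ^ 3) / (1 + v σ)|
              ≤ 2 * (|v σ| * (deriv v σ) ^ 2 + (1/2) * |v σ| ^ 3) := by
            rw [abs_div, abs_of_pos h1v0]
            have num : |v σ * (deriv v σ) ^ 2 + (1 / 2) * (v σ) ^ 3|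
                ≤ |v σ| * (deriv v σ) ^ 2 + (1/2) * |v σ| ^ 3 := by
              calc |v σ * (deriv v σ) ^ 2 + (1 / 2) * (v σ) ^ 3|
                  ≤ |v σ * (deriv v σ) ^ 2| + |(1 / 2) * (v σ) ^ 3| := abs_add_le _ _
                _ = |v σ| * (deriv v σ) ^ 2 + (1/2) * |v σ| ^ 3 := by
                    rw [abs_mul, abs_mul, abs_pow, sq_abs]
                    norm_num
            calc |v σ * (deriv v σ) ^ 2 + (1 / 2) * (v σ) ^ 3| / (1 + v σ)
                ≤ |v σ * (deriv v σ) ^ 2 + (1 / 2) * (v σ) ^ 3| / (1/2) :=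
                  div_le_div_of_nonneg_left (abs_nonneg _) (by norm_num) h1v
              _ = 2 * |v σ * (deriv v σ) ^ 2 + (1 / 2) * (v σ) ^ 3| := by ring
              _ ≤ 2 * (|v σ| * (deriv v σ) ^ 2 + (1/2) * |v σ| ^ 3) := by linarith
          linarith [e2, le_of_eq e1]
  have step2 : (n:ℝ) * |deriv v σ| * |I|
      + 2 * (|v σ| * (deriv v σ) ^ 2 + (1/2) * |v σ| ^ 3)
      ≤ (n:ℝ) * B * (4 * B ^ 2 * t) + 2 * (A * B ^ 2 + (1/2) * A ^ 3) := by
    gcongr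
  have key : (n:ℝ) * B * (4 * B ^ 2 * t) + 2 * (A * B ^ 2 + (1/2) * A ^ 3)
      = (4 * (n:ℝ) * t * (1 + t) ^ 3 + 2 * (1 + t ^ 2) * (1 + t) ^ 2
          + (1 + t ^ 2) ^ 3) * C₀ ^ 3 / τ ^ 3 := by
    rw [hBdef, hAdef]; ring
  have hpoly : 4 * (n:ℝ) * t * (1 + t) ^ 3 + 2 * (1 + t ^ 2) * (1 + t) ^ 2
      + (1 + t ^ 2) ^ 3 ≤ 100 * ((n:ℝ) + 1) * (1 + t ^ 6) := by
    have p1 := pow_le_one_add_pow_six t ht0 1 (by norm_num)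
    have p2 := pow_le_one_add_pow_six t ht0 2 (by norm_num)
    have p3 := pow_le_one_add_pow_six t ht0 3 (by norm_num)
    have p4 := pow_le_one_add_pow_six t ht0 4 (by norm_num)
    have p5 := pow_le_one_add_pow_six t ht0 5 (by norm_num)
    have q1 := mul_le_mul_of_nonneg_left p1 hn0
    have q2 := mul_le_mul_of_nonneg_left p2 hn0
    have q3 := mul_le_mul_of_nonneg_left p3 hn0
    have q4 := mul_le_mul_of_nonneg_left p4 hn0
    nlinarith [p1, p2, p3, p4, p5, q1, q2, q3, q4, pow_nonneg ht0 6]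
  have final : (4 * (n:ℝ) * t * (1 + t) ^ 3 + 2 * (1 + t ^ 2) * (1 + t) ^ 2
        + (1 + t ^ 2) ^ 3) * C₀ ^ 3 / τ ^ 3
      ≤ 100 * ((n:ℝ) + 1) * C₀ ^ 3 * (1 + t ^ 6) / τ ^ 3 := by
    apply div_le_div_of_nonneg_right ?_ (by positivity)
    · nlinarith [hpoly, pow_nonneg hC0.le 3, pow_nonneg ht0 6]
  rw [hσ6]
  calc |(-(n : ℝ)) * deriv v σ * I
        + (v σ * (deriv v σ) ^ 2 + (1 / 2) * (v σ) ^ 3) / (1 + v σ)|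
      ≤ (n:ℝ) * |deriv v σ| * |I|
        + 2 * (|v σ| * (deriv v σ) ^ 2 + (1/2) * |v σ| ^ 3) := habs
    _ ≤ (n:ℝ) * B * (4 * B ^ 2 * t) + 2 * (A * B ^ 2 + (1/2) * A ^ 3) := step2
    _ = _ := key
    _ ≤ 100 * ((n:ℝ) + 1) * C₀ ^ 3 * (1 + t ^ 6) / τ ^ 3 := final
end

section
/- Let n ≥ 2 be a natural number, C ≥ 0, T ∈ ℝ, and t₀ < T with T − t₀ ≤ e^{−2}. Let r : [t₀, T) → ℝ be a differentiable function with r(t) > 0 for all t, r(t) → 0 as t → T, and (d/dt)(r(t)²) ≤ −2(n−1) + 2C / log(1/(T−t)) for all t ∈ [t₀, T). Then for all t ∈ [t₀, T), r(t)² ≥ 2(n−1)(T−t) − 2C (T−t)/ log(1/(T−t)). -/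
open Filter

/-- Refined lower bound for the neck radius: if `n ≥ 2`, `C ≥ 0`, `t₀ < T` with
`T − t₀ ≤ e^{−2}`, and `r > 0` is differentiable on `[t₀, T)` with `r(t) → 0` as
`t → T` and `(r²)' ≤ −2(n−1) + 2C/log(1/(T−t))` on `[t₀, T)`, then
`r(t)² ≥ 2(n−1)(T−t) − 2C(T−t)/log(1/(T−t))` on `[t₀, T)`. -/
theorem neck_radius_lower_bound (n : ℕ) (hn : 2 ≤ n) (C T t₀ : ℝ) (hC : 0 ≤ C)
    (ht₀ : t₀ < T) (hclose : T - t₀ ≤ Real.exp (-2)) (r : ℝ → ℝ)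
    (hpos : ∀ t ∈ Set.Ico t₀ T, 0 < r t)
    (hdiff : ∀ t ∈ Set.Ico t₀ T, DifferentiableAt ℝ r t)
    (hlim : Tendsto r (nhdsWithin T (Set.Iio T)) (nhds 0))
    (hineq : ∀ t ∈ Set.Ico t₀ T,
      deriv (fun s => r s ^ 2) t ≤ -2 * ((n : ℝ) - 1) + 2 * C / Real.log (1 / (T - t))) :
    ∀ t ∈ Set.Ico t₀ T,
      r t ^ 2 ≥ 2 * ((n : ℝ) - 1) * (T - t) - 2 * C * (T - t) / Real.log (1 / (T - t)) := by
  intro t ht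
  obtain ⟨ht₀t, htT⟩ := ht
  have hTt : 0 < T - t := sub_pos.mpr htT
  set L := Real.log (1 / (T - t)) with hL
  have hL2 : 2 ≤ L := by
    rw [hL, one_div, Real.log_inv]
    have h1 : Real.log (T - t) ≤ Real.log (Real.exp (-2)) :=
      Real.log_le_log (by linarith) (le_trans (by linarith) hclose)
    rw [Real.log_exp] at h1; linarith
  have hLpos : 0 < L := by linarith
  set K : ℝ := 2 * ((n : ℝ) - 1) - 2 * C / L with hK
  set f : ℝ → ℝ := fun s => r s ^ 2 + K * s with hf
  have key : ∀ b ∈ Set.Ioo t T, f b ≤ f t := by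
    intro b hb
    have hsub : Set.Icc t b ⊆ Set.Ico t₀ T := fun s hs =>
      ⟨le_trans ht₀t hs.1, lt_of_le_of_lt hs.2 hb.2⟩
    have hdf : ∀ s ∈ Set.Icc t b, DifferentiableAt ℝ f s := by
      intro s hs
      exact ((hdiff s (hsub hs)).pow 2).add (differentiableAt_id.const_mul K)
    have hderiv : ∀ s ∈ interior (Set.Icc t b), deriv f s ≤ 0 := by
      intro s hs
      rw [interior_Icc] at hs
      have hsmem : s ∈ Set.Ico t₀ T := hsub ⟨hs.1.le, hs.2.le⟩
      have hd1 : HasDerivAt (fun u => r u ^ 2) (deriv (fun u => r u ^ 2) s) s :=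
        ((hdiff s hsmem).pow 2).hasDerivAt
      have hd2 : HasDerivAt (fun u : ℝ => K * u) K s := by
        simpa using (hasDerivAt_id s).const_mul K
      have hds : deriv f s = deriv (fun u => r u ^ 2) s + K := (hd1.add hd2).deriv
      rw [hds]
      have h1 := hineq s hsmem
      have hLs : L ≤ Real.log (1 / (T - s)) := by
        rw [hL]
        apply Real.log_le_log (by positivity)
        apply one_div_le_one_div_of_le (sub_pos.mpr hsmem.2)
        linarith [hs.1]
      have h2 : 2 * C / Real.log (1 / (T - s)) ≤ 2 * C / L := by
        gcongr
      rw [hK]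
      linarith
    have hanti := antitoneOn_of_deriv_nonpos (convex_Icc t b)
      (fun s hs => (hdf s hs).continuousAt.continuousWithinAt)
      (fun s hs => (hdf s (interior_subset hs)).differentiableWithinAt) hderiv
    exact hanti ⟨le_refl t, hb.1.le⟩ ⟨hb.1.le, le_refl b⟩ hb.1.le
  have hflim : Tendsto f (nhdsWithin T (Set.Iio T)) (nhds (K * T)) := by
    have h1 : Tendsto (fun b => r b ^ 2) (nhdsWithin T (Set.Iio T)) (nhds 0) := by
      simpa using hlim.pow 2
    have h2 : Tendsto (fun b => K * b) (nhdsWithin T (Set.Iio T)) (nhds (K * T)) :=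
      ((continuous_const.mul continuous_id).tendsto T).mono_left nhdsWithin_le_nhds
    simpa using h1.add h2
  have hev : ∀ᶠ b in nhdsWithin T (Set.Iio T), f b ≤ f t := by
    filter_upwards [Ioo_mem_nhdsLT_of_mem ⟨htT, le_refl T⟩] with b hb using key b hb
  have hle : K * T ≤ f t := le_of_tendsto hflim hev
  have hfin : K * (T - t) ≤ r t ^ 2 := by
    simp only [hf] at hle
    linarith [mul_sub K T t]
  have heq : K * (T - t) = 2 * ((n : ℝ) - 1) * (T - t) - 2 * C * (T - t) / L := by
    rw [hK]; ring
  rw [ge_iff_le, ← heq]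
  exact hfin
end
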